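/- arXiv:1208.4963 — 5 statements merged into one kernel-verified Lean document; each statement's English description precedes it below -/
import Mathlib

section
/- Let X be a Banach space (over ℝ or ℂ) and T : X → X a continuous linear operator. The following conditions are equivalent: (i) there exist a sequence of real numbers (C_n) with C_n → ∞ and a sequence (E_n) of subspaces of X of finite codimension such that for every n ≥ 1 and every x ∈ E_n one has ‖T^n x‖ ≥ C_n ‖x‖; (ii) there exist a constant C > 1, a subspace E of X of finite codimension and an integer n ≥ 1 such that ‖T^n x‖ ≥ C ‖x‖ for every x ∈ E; (iii) there exist a constant C > 1, a subspace E of X of finite codimension and an integer n ≥ 1 such that for every x ∈ E there exists an integer k with 1 ≤ k ≤ n for which ‖T^k x‖ ≥ C ‖x‖. -/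
open Filter Topology

/-!
(i) ⇒ (ii) ⇒ (iii) is immediate. For (iii) ⇒ (i) put `c = C ^ (1/n) > 1` and let `E_m` be the
finite-codimensional subspace of those `x` with `T^j x ∈ E` for all `j < m`. Starting from
`x ∈ E_m`, follow the orbit by expanding steps of length `k ≤ n`, each multiplying the norm by
`C ≥ c^k`, until a time `K ∈ [m, m + n]`; then `‖T^K x‖ ≥ c^K ‖x‖`, and since
`‖T^(K-m)‖ ≤ max 1 ‖T‖ ^ n` we get `‖T^m x‖ ≥ c^m ‖x‖ / max 1 ‖T‖ ^ n`, which tends to infinity.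
-/

/-- A subspace `E` of `X` has finite codimension if there is a finite-dimensional
subspace `F` of `X` with `E + F = X`. -/
def FiniteCodim {𝕜 X : Type*} [DivisionRing 𝕜] [AddCommGroup X] [Module 𝕜 X]
    (E : Submodule 𝕜 X) : Prop :=
  ∃ F : Submodule 𝕜 X, FiniteDimensional 𝕜 F ∧ E ⊔ F = ⊤

namespace FiniteCodim

variable {𝕜 X Y : Type*} [DivisionRing 𝕜] [AddCommGroup X] [Module 𝕜 X]
  [AddCommGroup Y] [Module 𝕜 Y]

theorem iff_finiteDimensional_quotient {E : Submodule 𝕜 X} :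
    FiniteCodim E ↔ FiniteDimensional 𝕜 (X ⧸ E) := by
  constructor
  · rintro ⟨F, hF, hEF⟩
    refine Module.Finite.of_surjective (E.mkQ ∘ₗ F.subtype) ?_
    rw [← LinearMap.range_eq_top, LinearMap.range_comp, Submodule.range_subtype,
      Submodule.map_mkQ_eq_top, hEF]
  · intro hE
    obtain ⟨F, hF⟩ := E.exists_isCompl
    exact ⟨F, Module.Finite.equiv (E.quotientEquivOfIsCompl F hF), hF.sup_eq_top⟩

theorem ker (g : X →ₗ[𝕜] Y) [FiniteDimensional 𝕜 Y] : FiniteCodim (LinearMap.ker g) :=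
  iff_finiteDimensional_quotient.2 (Module.Finite.equiv g.quotKerEquivRange.symm)

theorem comap {E : Submodule 𝕜 Y} (hE : FiniteCodim E) (f : X →ₗ[𝕜] Y) :
    FiniteCodim (E.comap f) := by
  have := iff_finiteDimensional_quotient.1 hE
  rw [← Submodule.ker_mkQ E, ← LinearMap.ker_comp]
  exact ker _

theorem iInf {ι : Type*} [Finite ι] {E : ι → Submodule 𝕜 X} (hE : ∀ i, FiniteCodim (E i)) :
    FiniteCodim (⨅ i, E i) := by
  have := fun i ↦ iff_finiteDimensional_quotient.1 (hE i)
  have : Fintype ι := Fintype.ofFinite ι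
  simp_rw [← Submodule.ker_mkQ (E _), ← LinearMap.ker_pi]
  exact ker _

end FiniteCodim

namespace ContinuousLinearMap

variable {𝕜 X : Type*} [NontriviallyNormedField 𝕜] [SeminormedAddCommGroup X] [NormedSpace 𝕜 X]

theorem norm_pow_le_max_one_pow (T : X →L[𝕜] X) {k n : ℕ} (hkn : k ≤ n) :
    ‖T ^ k‖ ≤ max 1 ‖T‖ ^ n := by
  calc ‖T ^ k‖ ≤ max 1 ‖T‖ ^ k := by
        rcases Nat.eq_zero_or_pos k with rfl | hk
        · rw [pow_zero, pow_zero]; exact norm_id_le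
        · exact (norm_pow_le' T hk).trans (by gcongr; exact le_max_right _ _)
    _ ≤ max 1 ‖T‖ ^ n := pow_le_pow_right₀ (le_max_left _ _) hkn

theorem norm_pow_apply_le_of_le_add (T : X →L[𝕜] X) (x : X) {m K n : ℕ} (hmK : m ≤ K)
    (hKm : K ≤ m + n) : ‖(T ^ K) x‖ ≤ max 1 ‖T‖ ^ n * ‖(T ^ m) x‖ := by
  obtain ⟨d, rfl⟩ := Nat.exists_eq_add_of_le hmK
  rw [add_comm, pow_add, mul_apply_eq_comp]
  exact ((T ^ d).le_opNorm _).trans (by gcongr; exact T.norm_pow_le_max_one_pow (by omega))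

theorem pow_mul_norm_le_of_forall_pow_apply_mem (T : X →L[𝕜] X) {E : Set X} {C c : ℝ}
    {n m : ℕ} (hT : ∀ y ∈ E, ∃ k, 1 ≤ k ∧ k ≤ n ∧ C * ‖y‖ ≤ ‖(T ^ k) y‖) (hc : 1 ≤ c)
    (hcC : c ^ n ≤ C) {x : X} (hx : ∀ j < m, (T ^ j) x ∈ E) :
    c ^ m * ‖x‖ ≤ max 1 ‖T‖ ^ n * ‖(T ^ m) x‖ := by
  -- Take the last time `K ≤ m + n` at which `‖T ^ K x‖ ≥ c ^ K ‖x‖`; if `K < m`, one more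
  -- expanding step from `T ^ K x ∈ E` would give a later such time.
  let P : ℕ → Prop := fun K ↦ c ^ K * ‖x‖ ≤ ‖(T ^ K) x‖
  let K := Nat.findGreatest P (m + n)
  have hPK : P K := Nat.findGreatest_spec (Nat.zero_le _) (by simp [P])
  have hmK : m ≤ K := by
    by_contra! hKm
    obtain ⟨k, hk1, hkn, hk⟩ := hT _ (hx K hKm)
    have hckC : c ^ k ≤ C := (pow_le_pow_right₀ hc hkn).trans hcC
    have hPKk : P (K + k) :=
      calc c ^ (K + k) * ‖x‖ = c ^ k * (c ^ K * ‖x‖) := by ring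
        _ ≤ C * ‖(T ^ K) x‖ :=
          mul_le_mul hckC hPK (by positivity) ((pow_nonneg (by linarith) k).trans hckC)
        _ ≤ ‖(T ^ (K + k)) x‖ := by rwa [add_comm, pow_add, mul_apply_eq_comp]
    have : K + k ≤ K := Nat.le_findGreatest (by omega) hPKk
    omega
  calc c ^ m * ‖x‖ ≤ c ^ K * ‖x‖ := by gcongr
    _ ≤ ‖(T ^ K) x‖ := hPK
    _ ≤ max 1 ‖T‖ ^ n * ‖(T ^ m) x‖ :=
      T.norm_pow_apply_le_of_le_add x hmK (Nat.findGreatest_le _)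

theorem exists_tendsto_atTop_of_forall_exists_pow (T : X →L[𝕜] X) {C : ℝ} {E : Submodule 𝕜 X}
    {n : ℕ} (hC : 1 < C) (hE : FiniteCodim E) (hn : 1 ≤ n)
    (hT : ∀ x ∈ E, ∃ k, 1 ≤ k ∧ k ≤ n ∧ C * ‖x‖ ≤ ‖(T ^ k) x‖) :
    ∃ (C : ℕ → ℝ) (E : ℕ → Submodule 𝕜 X), Tendsto C atTop atTop ∧
      (∀ m, FiniteCodim (E m)) ∧ ∀ m, ∀ x ∈ E m, C m * ‖x‖ ≤ ‖(T ^ m) x‖ := by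
  set c := C ^ (n⁻¹ : ℝ)
  have hc : 1 < c := Real.one_lt_rpow hC (by positivity)
  have hcC : c ^ n = C := Real.rpow_inv_natCast_pow (by positivity) (by omega)
  have hM : 0 < max 1 ‖T‖ ^ n := by positivity
  refine ⟨fun m ↦ c ^ m / max 1 ‖T‖ ^ n, fun m ↦ ⨅ j : Fin m, E.comap (T ^ (j : ℕ)).toLinearMap,
    (tendsto_pow_atTop_atTop_of_one_lt hc).atTop_div_const hM,
    fun m ↦ FiniteCodim.iInf fun _ ↦ hE.comap _, fun m x hx ↦ ?_⟩
  rw [div_mul_eq_mul_div, div_le_iff₀ hM, mul_comm ‖_‖]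
  refine T.pow_mul_norm_le_of_forall_pow_apply_mem hT hc.le hcC.le fun j hj ↦ ?_
  exact (Submodule.mem_iInf _).1 hx ⟨j, hj⟩

end ContinuousLinearMap

theorem stmt_3_general {𝕜 : Type*} [RCLike 𝕜] {X : Type*} [NormedAddCommGroup X] [NormedSpace 𝕜 X]
    (T : X →L[𝕜] X) :
    List.TFAE
      [ ∃ (C : ℕ → ℝ) (E : ℕ → Submodule 𝕜 X), Tendsto C atTop atTop ∧
          (∀ n, FiniteCodim (E n)) ∧
          ∀ n, 1 ≤ n → ∀ x ∈ E n, C n * ‖x‖ ≤ ‖(T ^ n) x‖,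
        ∃ (C : ℝ) (E : Submodule 𝕜 X) (n : ℕ), 1 < C ∧ FiniteCodim E ∧ 1 ≤ n ∧
          ∀ x ∈ E, C * ‖x‖ ≤ ‖(T ^ n) x‖,
        ∃ (C : ℝ) (E : Submodule 𝕜 X) (n : ℕ), 1 < C ∧ FiniteCodim E ∧ 1 ≤ n ∧
          ∀ x ∈ E, ∃ k, 1 ≤ k ∧ k ≤ n ∧ C * ‖x‖ ≤ ‖(T ^ k) x‖ ] := by
  tfae_have 1 → 2
  | ⟨C, E, hC, hE, hT⟩ => by
    obtain ⟨n, hn, hCn⟩ := ((eventually_ge_atTop 1).and (hC.eventually_gt_atTop 1)).exists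
    exact ⟨C n, E n, n, hCn, hE n, hn, hT n hn⟩
  tfae_have 2 → 3
  | ⟨C, E, n, hC, hE, hn, hT⟩ => ⟨C, E, n, hC, hE, hn, fun x hx ↦ ⟨n, hn, le_rfl, hT x hx⟩⟩
  tfae_have 3 → 1
  | ⟨C, E, n, hC, hE, hn, hT⟩ => by
    obtain ⟨C', E', hC', hE', hT'⟩ := T.exists_tendsto_atTop_of_forall_exists_pow hC hE hn hT
    exact ⟨C', E', hC', hE', fun m _ ↦ hT' m⟩
  tfae_finish

/-- **Theorem (Banach space criterion).** Let `X` be a Banach space over `ℝ` or `ℂ` and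
`T : X → X` a continuous linear operator.  The following are equivalent:
(i) there are reals `C_n → ∞` and finite-codimensional subspaces `E_n` with
`‖T^n x‖ ≥ C_n ‖x‖` for all `x ∈ E_n` and all `n ≥ 1`;
(ii) there are `C > 1`, a finite-codimensional subspace `E` and `n ≥ 1` with
`‖T^n x‖ ≥ C ‖x‖` for all `x ∈ E`;
(iii) there are `C > 1`, a finite-codimensional subspace `E` and `n ≥ 1` such that every
`x ∈ E` satisfies `‖T^k x‖ ≥ C ‖x‖` for some `1 ≤ k ≤ n`. -/
theorem stmt_3 {𝕜 : Type*} [RCLike 𝕜] {X : Type*} [NormedAddCommGroup X] [NormedSpace 𝕜 X]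
    [CompleteSpace X] (T : X →L[𝕜] X) :
    List.TFAE
      [ ∃ (C : ℕ → ℝ) (E : ℕ → Submodule 𝕜 X), Tendsto C atTop atTop ∧
          (∀ n, FiniteCodim (E n)) ∧
          ∀ n, 1 ≤ n → ∀ x ∈ E n, C n * ‖x‖ ≤ ‖(T ^ n) x‖,
        ∃ (C : ℝ) (E : Submodule 𝕜 X) (n : ℕ), 1 < C ∧ FiniteCodim E ∧ 1 ≤ n ∧
          ∀ x ∈ E, C * ‖x‖ ≤ ‖(T ^ n) x‖,
        ∃ (C : ℝ) (E : Submodule 𝕜 X) (n : ℕ), 1 < C ∧ FiniteCodim E ∧ 1 ≤ n ∧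
          ∀ x ∈ E, ∃ k, 1 ≤ k ∧ k ≤ n ∧ C * ‖x‖ ≤ ‖(T ^ k) x‖ ] :=
  stmt_3_general T
end

section
/- Let X be the complex space l^p with 1 ≤ p < ∞ or the complex space c_0, and let B_w : X → X be the weighted shift associated with a sequence (w_n)_{n≥1} of non-zero scalars. The following inequalities are equivalent: (1) sup_{n≥1} sup_{E ∈ cofin} inf_{x ∈ E\{0}} ‖B_w^n x‖/‖x‖ ≤ 1; (2) sup_{n≥1} sup_{N≥1} inf_{k≥N} ∏_{ν=1}^{n} |w_{ν+k}| ≤ 1; (3) sup_{n≥1} sup_{N≥1} inf_{k≥N} ∏_{ν=1}^{n} |w_{ν+k}| < ∞. -/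
/-!
For every `n`, both sides of (1) ⇔ (2) are computed exactly: the quantity
`sup_{E ∈ cofin} inf_{x ∈ E \ {0}} ‖B_wⁿ x‖ / ‖x‖` equals `L n = liminf_k ∏_{ν=1}^{n} |w_{ν+k}|`.
Only two properties of the canonical basis are used: it is `1`-unconditional, and right shifts are
isometric on it. A subspace of codimension `d` meets the span of any `d + 1` vectors `e_{k+n}` with
`∏ |w_{ν+k}| < r`, on which `‖B_wⁿ x‖ ≤ r ‖x‖`; this gives `≤`. Conversely, on the closed span of
the `e_j` with `j > m + n`, a subspace of finite codimension, `B_wⁿ` is bounded below by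
`inf_{k > m} ∏ |w_{ν+k}|`; this gives `≥`. Finally `L` is supermultiplicative,
`L m * L n ≤ L (m + n)`, so `L n > 1` would force `L (j n) ≥ (L n)^j → ∞`: hence (3) ⇒ (2).
-/

open Filter Topology
open scoped ENNReal NNReal

open scoped ZeroAtInfty

theorem coe_nnnorm_div_le_of_norm_le {E : Type*} [NormedAddCommGroup E] {x y : E} {r : ℝ≥0}
    (h : ‖y‖ ≤ r * ‖x‖) :
    (‖y‖₊ : ℝ≥0∞) / ‖x‖₊ ≤ r := by
  refine ENNReal.div_le_of_le_mul ?_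
  rw [← ENNReal.coe_mul, ENNReal.coe_le_coe, ← NNReal.coe_le_coe]
  simpa using h

theorem le_coe_nnnorm_div_of_le_norm {E : Type*} [NormedAddCommGroup E] {x y : E} {r : ℝ≥0}
    (hx : x ≠ 0) (h : r * ‖x‖ ≤ ‖y‖) :
    (r : ℝ≥0∞) ≤ ‖y‖₊ / ‖x‖₊ := by
  rw [ENNReal.le_div_iff_mul_le (Or.inl (by simpa using hx)) (Or.inl ENNReal.coe_ne_top),
    ← ENNReal.coe_mul, ENNReal.coe_le_coe, ← NNReal.coe_le_coe]
  simpa using h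

namespace ZeroAtInftyContinuousMap

theorem norm_apply_le {α β : Type*} [TopologicalSpace α] [SeminormedAddCommGroup β]
    (f : C₀(α, β)) (x : α) : ‖f x‖ ≤ ‖f‖ :=
  norm_toBCF_eq_norm (f := f) ▸ f.toBCF.norm_coe_le_norm x

theorem norm_le_of_forall_le {α β : Type*} [TopologicalSpace α] [SeminormedAddCommGroup β]
    {f : C₀(α, β)} {C : ℝ} (hC : 0 ≤ C) (h : ∀ x, ‖f x‖ ≤ C) : ‖f‖ ≤ C :=
  norm_toBCF_eq_norm (f := f) ▸ (f.toBCF.norm_le hC).2 h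

variable {b : ℕ → C₀(ℕ, ℂ)}

theorem sum_smul_add_apply (hb : ∀ j k, b j k = if k = j then 1 else 0) (s : Finset ℕ)
    (a : ℕ → ℂ) (m k : ℕ) :
    (∑ j ∈ s, a j • b (j + m)) k = ∑ j ∈ s, if k = j + m then a j else 0 := by
  have := map_sum (AddMonoidHom.mk' (fun f : C₀(ℕ, ℂ) => f k) fun _ _ => rfl)
    (fun j => a j • b (j + m)) s
  simp only [AddMonoidHom.mk'_apply] at this
  simp [this, hb]

theorem sum_smul_apply (hb : ∀ j k, b j k = if k = j then 1 else 0) (s : Finset ℕ)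
    (a : ℕ → ℂ) (k : ℕ) :
    (∑ j ∈ s, a j • b j) k = if k ∈ s then a k else 0 := by
  simpa using sum_smul_add_apply hb s a 0 k

theorem dense_span_range (hb : ∀ j k, b j k = if k = j then 1 else 0) :
    Dense (Submodule.span ℂ (Set.range b) : Set C₀(ℕ, ℂ)) := by
  refine fun f => mem_closure_of_tendsto (f := fun M => ∑ j ∈ Finset.range M, f j • b j)
    (Metric.tendsto_atTop.2 fun ε hε => ?_) (Eventually.of_forall fun M =>
      Submodule.sum_mem _ fun j _ => Submodule.smul_mem _ _ (Submodule.subset_span ⟨j, rfl⟩))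
  have hf : Tendsto f atTop (𝓝 0) := cocompact_eq_atTop (α := ℕ) ▸ zero_at_infty f
  obtain ⟨M₀, hM₀⟩ := eventually_atTop.1 (hf.eventually (Metric.ball_mem_nhds 0 (half_pos hε)))
  refine ⟨M₀, fun M hM => ?_⟩
  rw [dist_eq_norm]
  refine (norm_le_of_forall_le (half_pos hε).le fun k => ?_).trans_lt (half_lt_self hε)
  rw [sub_apply, sum_smul_apply hb]
  split_ifs with hk
  · simpa using (half_pos hε).le
  · simpa using (hM₀ k (by simp at hk; omega)).le

end ZeroAtInftyContinuousMap

theorem iSup_one_le_iInf_le_eq_liminf {α : Type*} [CompleteLattice α] (f : ℕ → α) :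
    ⨆ (N : ℕ) (_ : 1 ≤ N), ⨅ (k : ℕ) (_ : N ≤ k), f k = liminf f atTop := by
  rw [liminf_eq_iSup_iInf_of_nat]
  refine le_antisymm (iSup₂_le fun N _ => le_iSup_of_le N le_rfl) (iSup_le fun N => ?_)
  exact le_iSup₂_of_le (N + 1) (Nat.le_add_left 1 N)
    (iInf₂_mono' fun k hk => ⟨k, (Nat.le_succ N).trans hk, le_rfl⟩)

theorem ENNReal.le_one_of_eventually_pow_le {a C : ℝ≥0∞} (hC : C ≠ ⊤)
    (h : ∀ᶠ j in atTop, a ^ j ≤ C) : a ≤ 1 := by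
  by_contra! ha
  have hbig := (ENNReal.tendsto_pow_atTop_nhds_top_iff.2 ha).eventually
    (eventually_gt_nhds hC.lt_top)
  obtain ⟨j, hle, hlt⟩ := (h.and hbig).exists
  exact hle.not_gt hlt

theorem iSup_le_one_of_supermultiplicative {L : ℕ → ℝ≥0∞}
    (hL : ∀ m n, L m * L n ≤ L (m + n)) (hbdd : (⨆ (n : ℕ) (_ : 1 ≤ n), L n) ≠ ⊤) :
    (⨆ (n : ℕ) (_ : 1 ≤ n), L n) ≤ 1 := by
  refine iSup₂_le fun n hn => ENNReal.le_one_of_eventually_pow_le hbdd ?_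
  have hpow : ∀ j, 1 ≤ j → L n ^ j ≤ L (j * n) := by
    intro j hj
    induction j, hj using Nat.le_induction with
    | base => simp
    | succ j _ ih =>
      calc L n ^ (j + 1) = L n ^ j * L n := pow_succ _ _
        _ ≤ L (j * n) * L n := by gcongr
        _ ≤ L ((j + 1) * n) := by rw [add_one_mul]; exact hL _ _
  filter_upwards [eventually_ge_atTop 1] with j hj
  exact (hpow j hj).trans (le_iSup₂_of_le (j * n) (Nat.mul_pos hj hn) le_rfl)

/-- The modulus of the factor by which `B_wⁿ` maps `e_{k+n}` to a multiple of `e_k`. -/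
noncomputable def weightProd (w : ℕ → ℂ) (n k : ℕ) : ℝ≥0∞ :=
  ∏ ν ∈ Finset.Icc 1 n, (‖w (ν + k)‖₊ : ℝ≥0∞)

theorem weightProd_add (w : ℕ → ℂ) (m n k : ℕ) :
    weightProd w (m + n) k = weightProd w m k * weightProd w n (k + m) := by
  induction n with
  | zero => simp [weightProd]
  | succ n ih =>
    simp only [weightProd] at ih ⊢
    rw [← add_assoc, Finset.prod_Icc_succ_top (by omega), ih,
      Finset.prod_Icc_succ_top (by omega), mul_assoc,
      show m + n + 1 + k = n + 1 + (k + m) by omega]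

theorem liminf_weightProd_mul_le (w : ℕ → ℂ) (m n : ℕ) :
    liminf (weightProd w m) atTop * liminf (weightProd w n) atTop ≤
      liminf (weightProd w (m + n)) atTop := by
  have hsplit : weightProd w (m + n) = weightProd w m * fun k => weightProd w n (k + m) :=
    funext (weightProd_add w m n)
  rw [← liminf_nat_add (weightProd w n) m, hsplit]
  exact ENNReal.le_liminf_mul

section ShiftBasis

variable {X : Type*} [NormedAddCommGroup X] [NormedSpace ℂ X]

noncomputable def cofinMinModulus (S : X →L[ℂ] X) : ℝ≥0∞ :=
  ⨆ (E : Submodule ℂ X) (_ : FiniteCodim E), ⨅ x ∈ (E : Set X) \ {0}, (‖S x‖₊ : ℝ≥0∞) / ‖x‖₊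

theorem FiniteCodim.exists_mem_ne_zero_of_lt_finrank {E : Submodule ℂ X} (hE : FiniteCodim E) :
    ∃ d : ℕ, ∀ W : Submodule ℂ X, FiniteDimensional ℂ W → d < Module.finrank ℂ W →
      ∃ x ∈ W, x ∈ E ∧ x ≠ 0 := by
  obtain ⟨F, hF, hEF⟩ := hE
  have : Module.Finite ℂ (X ⧸ E) :=
    Submodule.FG.cofg_of_codisjoint (codisjoint_iff.2 hEF).symm (Module.Finite.iff_fg.1 hF)
  refine ⟨Module.finrank ℂ (X ⧸ E), fun W _ hW => ?_⟩
  obtain ⟨⟨x, hxW⟩, hxE, hx0⟩ :=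
    Submodule.exists_mem_ne_zero_of_ne_bot (LinearMap.ker_ne_bot_of_finrank_lt
      (f := E.mkQ ∘ₗ W.subtype) hW)
  exact ⟨x, hxW, (Submodule.Quotient.mk_eq_zero E).1 hxE, fun h => hx0 (Subtype.ext h)⟩

theorem finiteCodim_topologicalClosure_span_range_add {b : ℕ → X}
    (hb : Dense (Submodule.span ℂ (Set.range b) : Set X)) (M : ℕ) :
    FiniteCodim (Submodule.span ℂ (Set.range fun i => b (i + M))).topologicalClosure := by
  set E := (Submodule.span ℂ (Set.range fun i => b (i + M))).topologicalClosure
  set F := Submodule.span ℂ (b '' Set.Iio M)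
  have hF : FiniteDimensional ℂ F :=
    FiniteDimensional.span_of_finite ℂ ((Set.finite_Iio M).image b)
  refine ⟨F, hF, ?_⟩
  have hspan : Submodule.span ℂ (Set.range b) ≤ E ⊔ F := by
    refine Submodule.span_le.2 ?_
    rintro _ ⟨j, rfl⟩
    rcases lt_or_ge j M with hj | hj
    · exact Submodule.mem_sup_right (Submodule.subset_span ⟨j, hj, rfl⟩)
    · refine Submodule.mem_sup_left (Submodule.le_topologicalClosure _
        (Submodule.subset_span ⟨j - M, ?_⟩))
      simp only [Nat.sub_add_cancel hj]
  have hclosed := Submodule.isClosed_sup_finiteDimensional E F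
    (Submodule.isClosed_topologicalClosure _)
  rw [eq_top_iff, ← Submodule.dense_iff_topologicalClosure_eq_top.1 hb]
  exact Submodule.topologicalClosure_minimal _ hspan hclosed

/-- A `1`-unconditional sequence with dense span on which the right shifts act isometrically,
as the canonical basis of `ℓ^p` or `c₀` does. -/
structure IsShiftInvariantUnconditionalBasis (b : ℕ → X) : Prop where
  dense_span : Dense (Submodule.span ℂ (Set.range b) : Set X)
  ne_zero : ∀ j, b j ≠ 0
  norm_sum_le : ∀ (s : Finset ℕ) (a c : ℕ → ℂ), (∀ j ∈ s, ‖c j‖ ≤ ‖a j‖) →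
    ‖∑ j ∈ s, c j • b j‖ ≤ ‖∑ j ∈ s, a j • b j‖
  norm_sum_shift : ∀ (s : Finset ℕ) (a : ℕ → ℂ) (m : ℕ),
    ‖∑ j ∈ s, a j • b (j + m)‖ = ‖∑ j ∈ s, a j • b j‖

theorem norm_sum_ofReal_mul_smul (b : ℕ → X) (s : Finset ℕ) (a : ℕ → ℂ) {r : ℝ}
    (hr : 0 ≤ r) :
    ‖∑ j ∈ s, ((r : ℂ) * a j) • b j‖ = r * ‖∑ j ∈ s, a j • b j‖ := by
  simp only [mul_smul, ← Finset.smul_sum, norm_smul, Complex.norm_of_nonneg hr]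

theorem map_sum_smul_add {b : ℕ → X} {S : X →L[ℂ] X} {n : ℕ} {π : ℕ → ℂ}
    (hS : ∀ j, S (b (j + n)) = π j • b j) (s : Finset ℕ) (a : ℕ → ℂ) (m : ℕ) :
    S (∑ j ∈ s, a j • b (j + m + n)) = ∑ j ∈ s, (π (j + m) * a j) • b (j + m) := by
  simp only [map_sum, map_smul, hS, smul_smul, mul_comm]

namespace IsShiftInvariantUnconditionalBasis

variable {b : ℕ → X}

theorem linearIndependent (hb : IsShiftInvariantUnconditionalBasis b) :
    LinearIndependent ℂ b := by
  classical
  refine linearIndependent_iff'.2 fun s a hsum i hi => ?_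
  have hle := hb.norm_sum_le s a (fun j => if j = i then a j else 0) fun j _ => by
    split_ifs <;> simp
  simp only [ite_smul, zero_smul, Finset.sum_ite_eq', if_pos hi, hsum, norm_zero,
    norm_le_zero_iff] at hle
  exact (smul_eq_zero.1 hle).resolve_right (hb.ne_zero i)

variable {S : X →L[ℂ] X} {n : ℕ} {π : ℕ → ℂ}

theorem norm_map_sum_le (hb : IsShiftInvariantUnconditionalBasis b)
    (hS : ∀ j, S (b (j + n)) = π j • b j)
    (s : Finset ℕ) (a : ℕ → ℂ) (m : ℕ) {r : ℝ} (hr : 0 ≤ r)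
    (hπ : ∀ j ∈ s, ‖π (j + m)‖ ≤ r) :
    ‖S (∑ j ∈ s, a j • b (j + m + n))‖ ≤ r * ‖∑ j ∈ s, a j • b (j + m + n)‖ := by
  rw [map_sum_smul_add hS, hb.norm_sum_shift]
  simp only [add_assoc]
  rw [hb.norm_sum_shift, ← norm_sum_ofReal_mul_smul b s a hr]
  refine hb.norm_sum_le s _ _ fun j hj => ?_
  rw [norm_mul, norm_mul, Complex.norm_of_nonneg hr]
  exact mul_le_mul_of_nonneg_right (hπ j hj) (norm_nonneg _)

theorem le_norm_map_sum (hb : IsShiftInvariantUnconditionalBasis b)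
    (hS : ∀ j, S (b (j + n)) = π j • b j)
    (s : Finset ℕ) (a : ℕ → ℂ) (m : ℕ) {r : ℝ} (hr : 0 ≤ r)
    (hπ : ∀ j ∈ s, r ≤ ‖π (j + m)‖) :
    r * ‖∑ j ∈ s, a j • b (j + m + n)‖ ≤ ‖S (∑ j ∈ s, a j • b (j + m + n))‖ := by
  rw [map_sum_smul_add hS, hb.norm_sum_shift]
  simp only [add_assoc]
  rw [hb.norm_sum_shift, ← norm_sum_ofReal_mul_smul b s a hr]
  refine hb.norm_sum_le s _ _ fun j hj => ?_
  rw [norm_mul, norm_mul, Complex.norm_of_nonneg hr]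
  exact mul_le_mul_of_nonneg_right (hπ j hj) (norm_nonneg _)

theorem cofinMinModulus_le_liminf (hb : IsShiftInvariantUnconditionalBasis b)
    (hS : ∀ j, S (b (j + n)) = π j • b j) :
    cofinMinModulus S ≤ liminf (fun j => (‖π j‖₊ : ℝ≥0∞)) atTop := by
  refine iSup₂_le fun E hE => ?_
  obtain ⟨d, hd⟩ := hE.exists_mem_ne_zero_of_lt_finrank
  by_contra! hlt
  obtain ⟨r, hLr, hrE⟩ := ENNReal.lt_iff_exists_nnreal_btwn.1 hlt
  have hsmall : {j | ‖π j‖₊ < r}.Infinite := Nat.frequently_atTop_iff_infinite.1 <|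
    (frequently_lt_of_liminf_lt (by isBoundedDefault) hLr).mono fun j hj =>
      ENNReal.coe_lt_coe.1 hj
  obtain ⟨s, hs, hcard⟩ := hsmall.exists_subset_card_eq (d + 1)
  have hli : LinearIndependent ℂ fun j : (s : Set ℕ) => b (j + n) :=
    hb.linearIndependent.comp _ ((add_left_injective n).comp Subtype.val_injective)
  have hW : Module.finrank ℂ (Submodule.span ℂ ((fun j => b (j + n)) '' s)) = d + 1 := by
    rw [Set.image_eq_range, finrank_span_eq_card hli]
    simpa using hcard
  obtain ⟨x, hxW, hxE, hx0⟩ := hd (Submodule.span ℂ ((fun j => b (j + n)) '' s))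
    (FiniteDimensional.span_of_finite ℂ (s.finite_toSet.image _)) (by omega)
  obtain ⟨a, rfl⟩ := (Submodule.mem_span_image_finset_iff_exists_fun' ℂ).1 hxW
  have hnorm := hb.norm_map_sum_le hS s a 0 r.coe_nonneg fun j hj =>
    (NNReal.coe_lt_coe.2 (hs hj)).le
  simp only [add_zero] at hnorm
  exact hrE.not_ge (iInf₂_le_of_le _ ⟨hxE, hx0⟩ (coe_nnnorm_div_le_of_norm_le hnorm))

theorem liminf_le_cofinMinModulus (hb : IsShiftInvariantUnconditionalBasis b)
    (hS : ∀ j, S (b (j + n)) = π j • b j) :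
    liminf (fun j => (‖π j‖₊ : ℝ≥0∞)) atTop ≤ cofinMinModulus S := by
  rw [liminf_eq_iSup_iInf_of_nat]
  refine iSup_le fun m => ENNReal.le_of_forall_nnreal_lt fun r hr => ?_
  have hπ : ∀ j, m ≤ j → (r : ℝ) ≤ ‖π j‖ := fun j hj =>
    NNReal.coe_le_coe.2 (ENNReal.coe_le_coe.1 (hr.le.trans (iInf₂_le j hj)))
  set E := (Submodule.span ℂ (Set.range fun i => b (i + (m + n)))).topologicalClosure
  have hspan : ∀ x ∈ Submodule.span ℂ (Set.range fun i => b (i + (m + n))),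
      (r : ℝ) * ‖x‖ ≤ ‖S x‖ := by
    intro x hx
    obtain ⟨c, rfl⟩ := Finsupp.mem_span_range_iff_exists_finsupp.1 hx
    simpa only [Finsupp.sum, add_assoc] using
      hb.le_norm_map_sum hS c.support c m r.coe_nonneg fun j _ => hπ (j + m) (by omega)
  have hbound : ∀ x ∈ E, (r : ℝ) * ‖x‖ ≤ ‖S x‖ := fun x hx =>
    closure_minimal hspan
      (isClosed_le (f := fun x => (r : ℝ) * ‖x‖) (by fun_prop) (by fun_prop))
      (by rwa [← Submodule.topologicalClosure_coe])
  exact le_iSup₂_of_le E (finiteCodim_topologicalClosure_span_range_add hb.dense_span _)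
    (le_iInf₂ fun x hx => le_coe_nnnorm_div_of_le_norm hx.2 (hbound x hx.1))

theorem cofinMinModulus_eq_liminf (hb : IsShiftInvariantUnconditionalBasis b)
    (hS : ∀ j, S (b (j + n)) = π j • b j) :
    cofinMinModulus S = liminf (fun j => (‖π j‖₊ : ℝ≥0∞)) atTop :=
  (hb.cofinMinModulus_le_liminf hS).antisymm (hb.liminf_le_cofinMinModulus hS)

end IsShiftInvariantUnconditionalBasis

end ShiftBasis

namespace IsShiftInvariantUnconditionalBasis

variable {X Y : Type*} [NormedAddCommGroup X] [NormedSpace ℂ X] [NormedAddCommGroup Y]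
  [NormedSpace ℂ Y]

theorem of_linearIsometryEquiv (φ : X ≃ₗᵢ[ℂ] Y) {b : ℕ → X}
    (h : IsShiftInvariantUnconditionalBasis fun j => φ (b j)) :
    IsShiftInvariantUnconditionalBasis b := by
  have hnorm (s : Finset ℕ) (a : ℕ → ℂ) (f : ℕ → ℕ) :
      ‖∑ j ∈ s, a j • b (f j)‖ = ‖∑ j ∈ s, a j • φ (b (f j))‖ := by
    simp only [← φ.norm_map, map_sum, map_smul]
  have hnorm₀ (s : Finset ℕ) (a : ℕ → ℂ) :
      ‖∑ j ∈ s, a j • b j‖ = ‖∑ j ∈ s, a j • φ (b j)‖ :=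
    hnorm s a id
  refine ⟨?_, fun j h0 => h.ne_zero j (by rw [h0, map_zero]), fun s a c hac => ?_,
    fun s a m => ?_⟩
  · have hspan : (Submodule.span ℂ (Set.range fun j => φ (b j)) : Set Y) =
        φ '' Submodule.span ℂ (Set.range b) := by
      rw [Set.range_comp' φ b]
      exact congrArg SetLike.coe (Submodule.span_image (φ.toLinearEquiv : X →ₗ[ℂ] Y))
    rw [← φ.toHomeomorph.isDenseEmbedding.dense_image]
    exact hspan ▸ h.dense_span
  · rw [hnorm₀, hnorm₀]
    exact h.norm_sum_le s a c hac
  · rw [hnorm s a (· + m), hnorm₀]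
    exact h.norm_sum_shift s a m

theorem lp {p : ℝ≥0∞} [Fact (1 ≤ p)] (hp : p ≠ ⊤) {b : ℕ → lp (fun _ : ℕ => ℂ) p}
    (hb : ∀ j k, (b j : ℕ → ℂ) k = if k = j then 1 else 0) :
    IsShiftInvariantUnconditionalBasis b := by
  have hp0 : 0 < p.toReal :=
    ENNReal.toReal_pos (zero_lt_one.trans_le Fact.out).ne' hp
  have hne (j : ℕ) : b j ≠ 0 := fun h0 => by simpa [h0] using hb j j
  obtain rfl : b = fun j => lp.single (E := fun _ : ℕ => ℂ) p j 1 :=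
    funext fun j => lp.ext <| funext fun k => by rw [hb, lp.single_apply, Pi.single_apply]
  have hnorm (s : Finset ℕ) (a : ℕ → ℂ) (m : ℕ) :
      ‖∑ j ∈ s, a j • lp.single (E := fun _ : ℕ => ℂ) p (j + m) 1‖ ^ p.toReal =
        ∑ j ∈ s, ‖a j‖ ^ p.toReal := by
    simpa [Finset.sum_map, ← lp.single_smul] using
      lp.norm_sum_single hp0 (fun i => a (i - m)) (s.map (addRightEmbedding m))
  refine ⟨fun f => ?_, hne, fun s a c hac => ?_, fun s a m => ?_⟩
  · refine mem_closure_of_tendsto (lp.hasSum_single hp f).tendsto_sum_nat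
      (Eventually.of_forall fun M => Submodule.sum_mem _ fun j _ => ?_)
    have hsingle : lp.single p j (f j) = f j • lp.single (E := fun _ : ℕ => ℂ) p j 1 := by
      rw [← lp.single_smul, smul_eq_mul, mul_one]
    exact hsingle ▸ Submodule.smul_mem _ _ (Submodule.subset_span ⟨j, rfl⟩)
  · rw [← Real.rpow_le_rpow_iff (norm_nonneg _) (norm_nonneg _) hp0]
    simpa only [add_zero] using (hnorm s c 0).trans_le ((Finset.sum_le_sum fun j hj =>
      Real.rpow_le_rpow (norm_nonneg _) (hac j hj) hp0.le).trans (hnorm s a 0).ge)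
  · rw [← Real.rpow_left_inj (norm_nonneg _) (norm_nonneg _) hp0.ne', hnorm s a m]
    simpa only [add_zero] using (hnorm s a 0).symm

open ZeroAtInftyContinuousMap in
theorem zeroAtInfty {b : ℕ → C₀(ℕ, ℂ)} (hb : ∀ j k, b j k = if k = j then 1 else 0) :
    IsShiftInvariantUnconditionalBasis b := by
  refine ⟨dense_span_range hb, fun j h0 => by simpa [h0] using hb j j, fun s a c hac => ?_,
    fun s a m => le_antisymm (norm_le_of_forall_le (norm_nonneg _) fun k => ?_)
      (norm_le_of_forall_le (norm_nonneg _) fun k => ?_)⟩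
  · refine norm_le_of_forall_le (norm_nonneg _) fun k => ?_
    have ha := norm_apply_le (∑ j ∈ s, a j • b j) k
    rw [sum_smul_apply hb] at ha ⊢
    split_ifs at ha ⊢ with hk
    · exact (hac k hk).trans ha
    · exact ha
  · rcases lt_or_ge k m with hk | hk
    · rw [sum_smul_add_apply hb, Finset.sum_eq_zero fun j _ => if_neg (by omega), norm_zero]
      exact norm_nonneg _
    · obtain ⟨k, rfl⟩ := Nat.exists_eq_add_of_le' hk
      have : (∑ j ∈ s, a j • b (j + m)) (k + m) = (∑ j ∈ s, a j • b j) k := by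
        simp [sum_smul_add_apply hb, sum_smul_apply hb]
      exact this ▸ norm_apply_le _ k
  · have : (∑ j ∈ s, a j • b j) k = (∑ j ∈ s, a j • b (j + m)) (k + m) := by
      simp [sum_smul_add_apply hb, sum_smul_apply hb]
    exact this ▸ norm_apply_le _ (k + m)

end IsShiftInvariantUnconditionalBasis

theorem weightedShift_pow_apply {X : Type*} [NormedAddCommGroup X] [NormedSpace ℂ X]
    {e : ℕ → X} {w : ℕ → ℂ} {T : X →L[ℂ] X} (hT : ∀ n : ℕ, 1 ≤ n → T (e n) = w n • e (n - 1))
    (n j : ℕ) :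
    (T ^ n) (e (j + n + 1)) = (∏ ν ∈ Finset.Icc 1 n, w (ν + (j + 1))) • e (j + 1) := by
  induction n with
  | zero => simp
  | succ n ih =>
    rw [pow_succ]
    change (T ^ n) (T (e (j + (n + 1) + 1))) = _
    rw [hT _ (by omega), show j + (n + 1) + 1 - 1 = j + n + 1 by omega, map_smul, ih,
      smul_smul, Finset.prod_Icc_succ_top (by omega), mul_comm,
      show j + (n + 1) + 1 = n + 1 + (j + 1) by omega]

theorem stmt_7_general {X : Type*} [NormedAddCommGroup X] [NormedSpace ℂ X]
    (e : ℕ → X)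
    (hX : (∃ (pr : ℝ≥0∞) (_ : Fact (1 ≤ pr)), pr ≠ ⊤ ∧
            ∃ φ : X ≃ₗᵢ[ℂ] lp (fun _ : ℕ => ℂ) pr,
              ∀ n k : ℕ, (φ (e (n + 1)) : ℕ → ℂ) k = if k = n then 1 else 0) ∨
          (∃ φ : X ≃ₗᵢ[ℂ] ZeroAtInftyContinuousMap ℕ ℂ,
              ∀ n k : ℕ, (φ (e (n + 1))) k = if k = n then 1 else 0))
    (w : ℕ → ℂ)
    (T : X →L[ℂ] X) (hT : ∀ n : ℕ, 1 ≤ n → T (e n) = w n • e (n - 1)) :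
    List.TFAE
      [ (⨆ (n : ℕ) (_ : 1 ≤ n) (E : Submodule ℂ X) (_ : FiniteCodim E),
            ⨅ x ∈ (E : Set X) \ {0}, (‖(T ^ n) x‖₊ : ℝ≥0∞) / (‖x‖₊ : ℝ≥0∞)) ≤ 1,
        (⨆ (n : ℕ) (_ : 1 ≤ n) (N : ℕ) (_ : 1 ≤ N), ⨅ (k : ℕ) (_ : N ≤ k),
            ∏ ν ∈ Finset.Icc 1 n, (‖w (ν + k)‖₊ : ℝ≥0∞)) ≤ 1,
        (⨆ (n : ℕ) (_ : 1 ≤ n) (N : ℕ) (_ : 1 ≤ N), ⨅ (k : ℕ) (_ : N ≤ k),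
            ∏ ν ∈ Finset.Icc 1 n, (‖w (ν + k)‖₊ : ℝ≥0∞)) < ⊤ ] := by
  have hb : IsShiftInvariantUnconditionalBasis fun j => e (j + 1) := by
    rcases hX with ⟨p, _, hp, φ, hφ⟩ | ⟨φ, hφ⟩
    · exact .of_linearIsometryEquiv φ (.lp hp hφ)
    · exact .of_linearIsometryEquiv φ (.zeroAtInfty hφ)
  have hL (n : ℕ) : cofinMinModulus (T ^ n) = liminf (weightProd w n) atTop := by
    rw [hb.cofinMinModulus_eq_liminf (weightedShift_pow_apply hT n),
      ← liminf_nat_add (weightProd w n) 1]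
    simp only [weightProd, nnnorm_prod, ENNReal.ofNNReal_finsetProd]
  have hprod (n : ℕ) :
      (fun k => ∏ ν ∈ Finset.Icc 1 n, (‖w (ν + k)‖₊ : ℝ≥0∞)) = weightProd w n := rfl
  simp only [cofinMinModulus] at hL
  simp only [iSup_one_le_iInf_le_eq_liminf, hprod, hL]
  tfae_have 2 → 3 := fun h => h.trans_lt ENNReal.one_lt_top
  tfae_have 3 → 2 := fun h =>
    iSup_le_one_of_supermultiplicative (liminf_weightProd_mul_le w) h.ne
  tfae_finish

/-- **Proposition 3.1.** Let `X` be the complex space `ℓ^p` (`1 ≤ p < ∞`) or `c₀` — encoded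
by a linear isometric isomorphism `φ` onto Mathlib's `lp` space (with `1 ≤ p`, `p ≠ ∞`) or
onto `C₀(ℕ, ℂ)`, carrying the canonical basis `(e_n)_{n≥1}` (with `e 0 = 0`) to the unit
coordinate vectors — and let `B_w : X → X` (here `T`) be the weighted shift given by
`T e_n = w_n • e_{n-1}` for a sequence `(w_n)_{n≥1}` of non-zero scalars.  The following are
equivalent (suprema/infima taken in `[0,∞]`):
(1) `sup_{n≥1} sup_{E ∈ cofin} inf_{x ∈ E \ {0}} ‖T^n x‖ / ‖x‖ ≤ 1`;
(2) `sup_{n≥1} sup_{N≥1} inf_{k≥N} ∏_{ν=1}^{n} |w_{ν+k}| ≤ 1`;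
(3) `sup_{n≥1} sup_{N≥1} inf_{k≥N} ∏_{ν=1}^{n} |w_{ν+k}| < ∞`. -/
theorem stmt_7 {X : Type*} [NormedAddCommGroup X] [NormedSpace ℂ X] [CompleteSpace X]
    (e : ℕ → X) (he0 : e 0 = 0)
    (hX : (∃ (pr : ℝ≥0∞) (_ : Fact (1 ≤ pr)), pr ≠ ⊤ ∧
            ∃ φ : X ≃ₗᵢ[ℂ] lp (fun _ : ℕ => ℂ) pr,
              ∀ n k : ℕ, (φ (e (n + 1)) : ℕ → ℂ) k = if k = n then 1 else 0) ∨
          (∃ φ : X ≃ₗᵢ[ℂ] ZeroAtInftyContinuousMap ℕ ℂ,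
              ∀ n k : ℕ, (φ (e (n + 1))) k = if k = n then 1 else 0))
    (w : ℕ → ℂ) (hw : ∀ n, 1 ≤ n → w n ≠ 0)
    (T : X →L[ℂ] X) (hT : ∀ n : ℕ, 1 ≤ n → T (e n) = w n • e (n - 1)) :
    List.TFAE
      [ (⨆ (n : ℕ) (_ : 1 ≤ n) (E : Submodule ℂ X) (_ : FiniteCodim E),
            ⨅ x ∈ (E : Set X) \ {0}, (‖(T ^ n) x‖₊ : ℝ≥0∞) / (‖x‖₊ : ℝ≥0∞)) ≤ 1,
        (⨆ (n : ℕ) (_ : 1 ≤ n) (N : ℕ) (_ : 1 ≤ N), ⨅ (k : ℕ) (_ : N ≤ k),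
            ∏ ν ∈ Finset.Icc 1 n, (‖w (ν + k)‖₊ : ℝ≥0∞)) ≤ 1,
        (⨆ (n : ℕ) (_ : 1 ≤ n) (N : ℕ) (_ : 1 ≤ N), ⨅ (k : ℕ) (_ : N ≤ k),
            ∏ ν ∈ Finset.Icc 1 n, (‖w (ν + k)‖₊ : ℝ≥0∞)) < ⊤ ] :=
  stmt_7_general e hX w T hT
end

section
/- Let (w_n)_{n≥1} be a sequence of non-zero scalars. Then sup_{n≥1} sup_{N≥1} inf_{k≥N} ∏_{ν=1}^{n} |w_{ν+k}| > 1 if and only if sup_{n≥1} inf_{k≥1} ∏_{ν=1}^{n} |w_{ν+k}| = ∞. -/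
/-!
If some window length `n` has all `n`-products `∏_{ν=1}^n |w_{ν+k}|` eventually `≥ c > 1`, then,
the weights being non-zero, the finitely many earlier `n`-products are bounded below by some
`δ > 0`. Cutting a window of length `(N + j) n` into consecutive blocks of length `n` gives
products `≥ δ ^ N c ^ j` for every starting point `k ≥ 1`, and these tend to `∞`.
-/

open Filter Topology Finset
open scoped ENNReal

noncomputable def windowProd (a : ℕ → ℝ≥0∞) (n k : ℕ) : ℝ≥0∞ :=
  ∏ ν ∈ Icc 1 n, a (ν + k)

theorem windowProd_succ (a : ℕ → ℝ≥0∞) (n k : ℕ) :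
    windowProd a (n + 1) k = windowProd a n k * a (n + 1 + k) :=
  prod_Icc_succ_top (by omega) _

theorem windowProd_add (a : ℕ → ℝ≥0∞) (m n k : ℕ) :
    windowProd a (m + n) k = windowProd a m k * windowProd a n (m + k) := by
  induction n with
  | zero => simp [windowProd]
  | succ n ih =>
    rw [← add_assoc, windowProd_succ, ih, windowProd_succ, mul_assoc]
    congr 3
    omega

theorem exists_ne_zero_forall_le_of_eventually_ge {f : ℕ → ℝ≥0∞} {c : ℝ≥0∞} {N : ℕ}
    (hf : ∀ j, 1 ≤ j → f j ≠ 0) (hc : c ≠ 0) (hcf : ∀ j, N ≤ j → c ≤ f j) :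
    ∃ δ ≠ 0, ∀ j, 1 ≤ j → δ ≤ f j := by
  refine ⟨(Icc 1 N).inf f ⊓ c, ?_, fun j hj => ?_⟩
  · have hinf : 0 < (Icc 1 N).inf f := (Finset.lt_inf_iff ENNReal.zero_lt_top).mpr
      fun j hj => pos_iff_ne_zero.mpr (hf j (mem_Icc.mp hj).1)
    exact (lt_inf_iff.mpr ⟨hinf, pos_iff_ne_zero.mpr hc⟩).ne'
  · rcases le_or_gt N j with hNj | hjN
    · exact inf_le_right.trans (hcf j hNj)
    · exact inf_le_left.trans (Finset.inf_le (mem_Icc.mpr ⟨hj, hjN.le⟩))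

section windowProd

variable {a : ℕ → ℝ≥0∞}

theorem windowProd_ne_zero (ha : ∀ i, 1 ≤ i → a i ≠ 0) (n k : ℕ) : windowProd a n k ≠ 0 :=
  prod_ne_zero_iff.mpr fun ν hν => ha _ (by simp only [mem_Icc] at hν; omega)

theorem pow_le_windowProd_mul {n k₀ : ℕ} {b : ℝ≥0∞} (hb : ∀ k, k₀ ≤ k → b ≤ windowProd a n k)
    (m k : ℕ) (hk : k₀ ≤ k) : b ^ m ≤ windowProd a (m * n) k := by
  induction m with
  | zero => simp [windowProd]
  | succ m ih =>
    rw [add_one_mul, windowProd_add, pow_succ]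
    exact mul_le_mul' ih (hb _ (by omega))

theorem iSup_iInf_windowProd_eq_top (ha : ∀ i, 1 ≤ i → a i ≠ 0) {n N : ℕ} {c : ℝ≥0∞}
    (hn : 1 ≤ n) (hc : 1 < c) (hcN : ∀ k, N ≤ k → c ≤ windowProd a n k) :
    ⨆ (m : ℕ) (_ : 1 ≤ m), ⨅ (k : ℕ) (_ : 1 ≤ k), windowProd a m k = ⊤ := by
  obtain ⟨δ, hδ, hδn⟩ := exists_ne_zero_forall_le_of_eventually_ge
    (fun j _ => windowProd_ne_zero ha n j) (one_pos.trans hc).ne' hcN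
  have hbound : ∀ j k, 1 ≤ k → δ ^ N * c ^ j ≤ windowProd a ((N + j) * n) k := fun j k hk => by
    rw [add_mul, windowProd_add]
    exact mul_le_mul' (pow_le_windowProd_mul hδn N k hk)
      (pow_le_windowProd_mul hcN j _ (by nlinarith))
  have hlim : Tendsto (fun j : ℕ => δ ^ N * c ^ j) atTop (𝓝 ⊤) := by
    have := ENNReal.Tendsto.const_mul (a := δ ^ N)
      (ENNReal.tendsto_pow_atTop_nhds_top_iff.mpr hc) (Or.inl ENNReal.top_ne_zero)
    rwa [ENNReal.mul_top (pow_ne_zero N hδ)] at this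
  refine top_le_iff.mp (le_of_tendsto hlim ?_)
  filter_upwards [eventually_ge_atTop 1] with j hj
  refine le_iSup₂_of_le ((N + j) * n) (Nat.one_le_iff_ne_zero.mpr (by positivity)) ?_
  exact le_iInf₂ (hbound j)

theorem one_lt_iSup_iSup_iInf_windowProd_iff (ha : ∀ i, 1 ≤ i → a i ≠ 0) :
    1 < (⨆ (n : ℕ) (_ : 1 ≤ n) (N : ℕ) (_ : 1 ≤ N), ⨅ (k : ℕ) (_ : N ≤ k), windowProd a n k) ↔
      (⨆ (n : ℕ) (_ : 1 ≤ n), ⨅ (k : ℕ) (_ : 1 ≤ k), windowProd a n k) = ⊤ := by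
  constructor
  · intro h
    simp only [lt_iSup_iff] at h
    obtain ⟨n, hn, N, -, hc⟩ := h
    exact iSup_iInf_windowProd_eq_top ha hn hc fun k hk => iInf₂_le k hk
  · intro h
    refine h ▸ ENNReal.one_lt_top |>.trans_le ?_
    exact iSup₂_mono fun n _ => le_iSup₂_of_le 1 le_rfl le_rfl

end windowProd

/-- **Proposition (weights).** For a sequence `(w_n)_{n ≥ 1}` of non-zero scalars (in `ℝ` or
`ℂ`), one has `sup_{n≥1} sup_{N≥1} inf_{k≥N} ∏_{ν=1}^{n} |w_{ν+k}| > 1` if and only if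
`sup_{n≥1} inf_{k≥1} ∏_{ν=1}^{n} |w_{ν+k}| = ∞`, the suprema and infima being taken
in `[0, ∞]`. -/
theorem stmt_8 {𝕜 : Type*} [RCLike 𝕜] (w : ℕ → 𝕜) (hw : ∀ n, 1 ≤ n → w n ≠ 0) :
    1 < (⨆ (n : ℕ) (_ : 1 ≤ n) (N : ℕ) (_ : 1 ≤ N), ⨅ (k : ℕ) (_ : N ≤ k),
          ∏ ν ∈ Finset.Icc 1 n, (‖w (ν + k)‖₊ : ℝ≥0∞)) ↔
      (⨆ (n : ℕ) (_ : 1 ≤ n), ⨅ (k : ℕ) (_ : 1 ≤ k),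
          ∏ ν ∈ Finset.Icc 1 n, (‖w (ν + k)‖₊ : ℝ≥0∞)) = ⊤ :=
  one_lt_iSup_iSup_iInf_windowProd_iff (a := fun i => ‖w i‖₊) fun i hi => by
    simpa using hw i hi
end

section
/- Let X be a Fréchet sequence space with a continuous norm containing all unit sequences e_k, let (p_j) be an increasing sequence of norms defining the topology of X, and let B_w : X → X be a weighted shift. Then the following assertions are equivalent: (i) there exists J ≥ 1 such that for every j ≥ 1 one has sup_{n≥1} sup_{N≥1} inf_{k≥N} p_J(B_w^n e_k)/p_j(e_k) = ∞; (ii) there exists J ≥ 1 such that for every j ≥ 1 one has sup_{n≥1} sup_{N≥1} inf_{k≥N} max_{1≤m≤n} p_J(B_w^m e_k)/p_j(e_k) > 1. -/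
/-!
Rescaling `v k = (w 1 ⋯ w k)⁻¹ • e k` turns the weighted shift into the plain backward shift
`v (k + 1) ↦ v k`, so that `p_J (T^m e_k) / p_j (e_k) = p_J (v (k - m)) / p_j (v k)`.
Condition (ii) for `j = J` says that from every large `k` one can step back by at most `n`
places while multiplying `p_J (v ·)` by a fixed `q > 1`. Iterating such steps from `k` down to
a barrier `k - n'`, we land less than `n` places below it; continuity of `T, …, T^(n-1)`
lets us jump up to the barrier at the cost of a constant `K` and of passing from `p_J` to some
`p_J'`. After `s` steps the ratio is at least `q^s / K`, and a first step given by (ii) for an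
arbitrary `j` passes from `p_j` to `p_J`. This is (i) with `J'`.
-/

open scoped ENNReal

def BackwardGain (q : ℝ) (n N : ℕ) (a b : ℕ → ℝ) : Prop :=
  ∀ k, N ≤ k → ∃ m, 1 ≤ m ∧ m ≤ n ∧ q * a k ≤ b (k - m)

section Descent

variable {a b : ℕ → ℝ} {q K : ℝ} {n N : ℕ}

theorem BackwardGain.one_le (h : BackwardGain q n N a b) : 1 ≤ n := by
  obtain ⟨m, hm1, hmn, -⟩ := h N le_rfl
  omega

theorem BackwardGain.exists_pow_mul_le (hq : 0 ≤ q)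
    (hstep : BackwardGain q n N a a) {B : ℕ} (hB : N ≤ B) :
    ∀ k, B < k + n → ∃ l r, l ≤ B ∧ B < l + n ∧ k ≤ l + r * n ∧ q ^ r * a k ≤ a l := by
  intro k
  induction k using Nat.strong_induction_on with
  | _ k ih =>
    intro hk
    by_cases hkB : k ≤ B
    · exact ⟨k, 0, hkB, hk, by simp, by simp⟩
    obtain ⟨m, hm1, hmn, hgain⟩ := hstep k (by omega)
    obtain ⟨l, r, hlB, hBl, hkl, hl⟩ := ih (k - m) (by omega) (by omega)
    refine ⟨l, r + 1, hlB, hBl, by rw [add_one_mul]; omega, ?_⟩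
    calc q ^ (r + 1) * a k = q ^ r * (q * a k) := by ring
      _ ≤ q ^ r * a (k - m) := by gcongr
      _ ≤ a l := hl

theorem BackwardGain.pow_mul_le_mul (hq : 1 ≤ q) (ha : ∀ k, 0 ≤ a k)
    (hstep : BackwardGain q n N a a)
    (hshift : ∀ i < n, ∀ k, a k ≤ K * b (k + i)) {B s k : ℕ} (hB : N ≤ B) (hk : B + s * n ≤ k) :
    q ^ s * a k ≤ K * b B := by
  have hn := hstep.one_le
  obtain ⟨l, r, hlB, hBl, hkl, hl⟩ :=
    hstep.exists_pow_mul_le (zero_le_one.trans hq) hB k (by omega)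
  have hsr : s ≤ r := Nat.le_of_mul_le_mul_right (by omega : s * n ≤ r * n) hn
  calc q ^ s * a k ≤ q ^ r * a k := by gcongr; exact ha k
    _ ≤ a l := hl
    _ ≤ K * b (l + (B - l)) := hshift _ (by omega) l
    _ = K * b B := by rw [Nat.add_sub_cancel' hlB]

end Descent

theorem exists_forall_mul_le_of_backwardGain {a : ℕ → ℕ → ℝ} (ha : ∀ j k, 0 < a j k)
    {J : ℕ} (hshift : ∀ n, ∃ J', ∃ K > 0, ∀ i < n, ∀ k, a J k ≤ K * a J' (k + i))
    (hgain : ∀ j, ∃ q > 1, ∃ n N, BackwardGain q n N (a j) (a J)) :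
    ∃ J', ∀ j, ∀ t : ℝ, 0 ≤ t →
      ∃ n, 1 ≤ n ∧ ∃ N, n ≤ N ∧ ∀ k, N ≤ k → t * a j k ≤ a J' (k - n) := by
  obtain ⟨q, hq, n₀, N₀, hstep⟩ := hgain J
  obtain ⟨J', K, hK, hKshift⟩ := hshift n₀
  refine ⟨J', fun j t ht => ?_⟩
  obtain ⟨qj, hqj, nj, Nj, hj⟩ := hgain j
  obtain ⟨s, hs⟩ := pow_unbounded_of_one_lt (t * K) hq
  have hnj := hj.one_le
  refine ⟨nj + s * n₀, by omega, N₀ + Nj + (nj + s * n₀), by omega, fun k hk => ?_⟩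
  obtain ⟨m, -, hm, hqjm⟩ := hj k (by omega)
  have hJ : q ^ s * a J (k - m) ≤ K * a J' (k - (nj + s * n₀)) :=
    hstep.pow_mul_le_mul hq.le (fun k => (ha J k).le) hKshift (by omega) (by omega)
  have hjJ : a j k ≤ a J (k - m) := (le_mul_of_one_le_left (ha j k).le hqj.le).trans hqjm
  refine (mul_le_mul_of_nonneg_left hjJ ht).trans (le_of_mul_le_mul_left ?_ hK)
  calc K * (t * a J (k - m)) = t * K * a J (k - m) := by ring
    _ ≤ q ^ s * a J (k - m) := by gcongr; exact (ha J _).le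
    _ ≤ K * a J' (k - (nj + s * n₀)) := hJ

section Ratios

theorem iSup_iInf_le_iSup_iInf_biSup {α : Type*} [CompleteLattice α] (f : ℕ → ℕ → α) :
    ⨆ (n : ℕ) (_ : 1 ≤ n) (N : ℕ), ⨅ (k : ℕ) (_ : N ≤ k), f n k ≤
      ⨆ (n : ℕ) (_ : 1 ≤ n) (N : ℕ), ⨅ (k : ℕ) (_ : N ≤ k), ⨆ m ∈ Finset.Icc 1 n, f m k :=
  iSup₂_mono fun _ hn => iSup_mono fun _ => iInf₂_mono fun k _ =>
    le_biSup (fun m => f m k) (Finset.mem_Icc.mpr ⟨hn, le_rfl⟩)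

variable {f : ℕ → ℕ → ℝ≥0∞} {a b : ℕ → ℝ}

theorem exists_backwardGain_of_one_lt_iSup (ha : ∀ k, 0 < a k)
    (hf : ∀ m k, m ≤ k → f m k = ENNReal.ofReal (b (k - m) / a k))
    (h : 1 < ⨆ (n : ℕ) (_ : 1 ≤ n) (N : ℕ), ⨅ (k : ℕ) (_ : N ≤ k), ⨆ m ∈ Finset.Icc 1 n, f m k) :
    ∃ q > 1, ∃ n N, BackwardGain q n N a b := by
  simp only [lt_iSup_iff] at h
  obtain ⟨n, -, N, hN⟩ := h
  obtain ⟨q, hq0, hq, hqN⟩ := ENNReal.lt_iff_exists_real_btwn.mp hN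
  refine ⟨q, ENNReal.one_lt_ofReal.mp hq, n, max N n, fun k hk => ?_⟩
  obtain ⟨m, hm, hqm⟩ := lt_biSup_iff.mp (hqN.trans_le (biInf_le _ (le_of_max_le_left hk)))
  obtain ⟨hm1, hmn⟩ := Finset.mem_Icc.mp hm
  rw [hf m k (by omega), ENNReal.ofReal_lt_ofReal_iff_of_nonneg hq0] at hqm
  exact ⟨m, hm1, hmn, ((lt_div_iff₀ (ha k)).mp hqm).le⟩

theorem iSup_iInf_eq_top_of_forall_exists (ha : ∀ k, 0 < a k)
    (hf : ∀ m k, m ≤ k → f m k = ENNReal.ofReal (b (k - m) / a k))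
    (h : ∀ t : ℝ, 0 ≤ t → ∃ n, 1 ≤ n ∧ ∃ N, n ≤ N ∧ ∀ k, N ≤ k → t * a k ≤ b (k - n)) :
    ⨆ (n : ℕ) (_ : 1 ≤ n) (N : ℕ), ⨅ (k : ℕ) (_ : N ≤ k), f n k = ⊤ := by
  refine ENNReal.eq_top_of_forall_nnreal_le fun t => ?_
  obtain ⟨n, hn, N, hnN, hN⟩ := h t t.2
  refine le_iSup₂_of_le n hn (le_iSup_of_le N (le_iInf₂ fun k hk => ?_))
  rw [hf n k (hnN.trans hk), ← ENNReal.ofReal_coe_nnreal]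
  exact ENNReal.ofReal_le_ofReal ((le_div_iff₀ (ha k)).mpr (hN k hk))

end Ratios

theorem Function.iterate_apply_add_of_apply_succ {α : Type*} {f : α → α} {v : ℕ → α}
    (hv : ∀ k, f (v (k + 1)) = v k) (m k : ℕ) : f^[m] (v (k + m)) = v k := by
  induction m with
  | zero => rfl
  | succ m ih => rw [Function.iterate_succ_apply, ← add_assoc, hv, ih]

section WeightedShift

variable {𝕜 X : Type*} [AddCommGroup X]

theorem exists_smul_eq_of_weightedShift [Field 𝕜] [Module 𝕜 X] {F : Type*} [FunLike F X X]
    [LinearMapClass F 𝕜 X X] (T : F)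
    {e : ℕ → X} {w : ℕ → 𝕜} (hw : ∀ n, 1 ≤ n → w n ≠ 0)
    (hT : ∀ k, 1 ≤ k → T (e k) = w k • e (k - 1)) :
    ∃ (c : ℕ → 𝕜) (v : ℕ → X), (∀ k, c k ≠ 0) ∧ (∀ k, e k = c k • v k) ∧
      ∀ k, T (v (k + 1)) = v k := by
  set c : ℕ → 𝕜 := fun k => ∏ i ∈ Finset.range k, w (i + 1)
  have hc : ∀ k, c k ≠ 0 := fun k =>
    Finset.prod_ne_zero_iff.mpr fun i _ => hw (i + 1) (Nat.le_add_left 1 i)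
  refine ⟨c, fun k => (c k)⁻¹ • e k, hc, fun k => (smul_inv_smul₀ (hc k) _).symm, fun k => ?_⟩
  rw [map_smul, hT (k + 1) (Nat.le_add_left 1 k), smul_smul, Nat.add_sub_cancel]
  congr 1
  simp only [c, Finset.prod_range_succ, mul_inv, mul_assoc,
    inv_mul_cancel₀ (hw (k + 1) (Nat.le_add_left 1 k)), mul_one]

variable [TopologicalSpace X]

theorem ofReal_div_ofReal_seminorm_pow_apply_smul [NormedField 𝕜] [Module 𝕜 X]
    {T : X →L[𝕜] X} {v : ℕ → X} (hv : ∀ k, T (v (k + 1)) = v k) (p p' : Seminorm 𝕜 X)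
    {c : 𝕜} (hc : c ≠ 0) {m k : ℕ} (hmk : m ≤ k) (hp' : 0 < p' (v k)) :
    ENNReal.ofReal (p ((T ^ m) (c • v k))) / ENNReal.ofReal (p' (c • v k)) =
      ENNReal.ofReal (p (v (k - m)) / p' (v k)) := by
  obtain ⟨i, rfl⟩ := Nat.exists_eq_add_of_le' hmk
  rw [map_smul, pow_apply_eq_iterate, Function.iterate_apply_add_of_apply_succ hv,
    map_smul_eq_mul, map_smul_eq_mul,
    ← ENNReal.ofReal_div_of_pos (mul_pos (norm_pos_iff.mpr hc) hp'),
    mul_div_mul_left _ _ (norm_ne_zero_iff.mpr hc), Nat.add_sub_cancel]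

variable [NontriviallyNormedField 𝕜] [Module 𝕜 X] {P : ℕ → Seminorm 𝕜 X}

theorem WithSeminorms.exists_le_mul_of_monotone (hP : WithSeminorms P) (hmono : Monotone P)
    (q : Seminorm 𝕜 X) (hq : Continuous q) : ∃ j, ∃ C > 0, ∀ x, q x ≤ C * P j x := by
  obtain ⟨s, C, hC, hqs⟩ := Seminorm.bound_of_continuous hP q hq
  have hsup : s.sup P ≤ P (s.sup id) :=
    Finset.sup_le fun i hi => hmono (Finset.le_sup (f := id) hi)
  exact ⟨s.sup id, C, NNReal.coe_pos.mpr (pos_iff_ne_zero.mpr hC), fun x =>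
    (hqs x).trans (mul_le_mul_of_nonneg_left (hsup x) C.2)⟩

theorem WithSeminorms.exists_seminorm_pow_apply_le (hP : WithSeminorms P) (hmono : Monotone P)
    (T : X →L[𝕜] X) (J n : ℕ) :
    ∃ J', ∃ K > 0, ∀ i < n, ∀ x, P J ((T ^ i) x) ≤ K * P J' x := by
  have : IsTopologicalAddGroup X := hP.topologicalAddGroup
  obtain ⟨J', K, hK, hbound⟩ := hP.exists_le_mul_of_monotone hmono
    ((Finset.range n).sup fun i => (P J).comp (T ^ i : X →L[𝕜] X).toLinearMap)
    (Seminorm.continuous_finsetSup fun i _ => (hP.continuous_seminorm J).comp (T ^ i).continuous)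
  exact ⟨J', K, hK, fun i hi x =>
    (Seminorm.le_finset_sup_apply (Finset.mem_range.mpr hi)).trans (hbound x)⟩

end WeightedShift

theorem stmt_13_general {𝕜 : Type*} [RCLike 𝕜]
    {X : Type*} [AddCommGroup X] [Module 𝕜 X] [UniformSpace X]
    (toSeq : X →ₗ[𝕜] (ℕ → 𝕜))
    (P : ℕ → Seminorm 𝕜 X) (hPmono : Monotone P) (hP : WithSeminorms P)
    (hPnorm : ∀ (j : ℕ) (x : X), x ≠ 0 → 0 < P j x)
    (e : ℕ → X) (he : ∀ k, toSeq (e k) = Pi.single k 1)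
    (w : ℕ → 𝕜) (hw : ∀ n, 1 ≤ n → w n ≠ 0)
    (T : X →L[𝕜] X)
    (hT : ∀ k : ℕ, 1 ≤ k → T (e k) = w k • e (k - 1)) :
    (∃ J : ℕ, ∀ j : ℕ,
        (⨆ (n : ℕ) (_ : 1 ≤ n) (N : ℕ), ⨅ (k : ℕ) (_ : N ≤ k),
          ENNReal.ofReal (P J ((T ^ n) (e k))) / ENNReal.ofReal (P j (e k))) = ⊤) ↔
      (∃ J : ℕ, ∀ j : ℕ,
        1 < ⨆ (n : ℕ) (_ : 1 ≤ n) (N : ℕ), ⨅ (k : ℕ) (_ : N ≤ k),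
          ⨆ m ∈ Finset.Icc 1 n,
            ENNReal.ofReal (P J ((T ^ m) (e k))) / ENNReal.ofReal (P j (e k))) := by
  obtain ⟨c, v, hc, hev, hTv⟩ := exists_smul_eq_of_weightedShift T hw hT
  have he0 : ∀ k, e k ≠ 0 := fun k h => by simpa [h] using congr_fun (he k) k
  have hv : ∀ j k, 0 < P j (v k) := fun j k =>
    hPnorm j _ fun h => he0 k (by rw [hev, h, smul_zero])
  have hratio : ∀ J j m k, m ≤ k → ENNReal.ofReal (P J ((T ^ m) (e k))) /
      ENNReal.ofReal (P j (e k)) = ENNReal.ofReal (P J (v (k - m)) / P j (v k)) :=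
    fun J j m k hmk => by
      rw [hev]
      exact ofReal_div_ofReal_seminorm_pow_apply_smul hTv _ _ (hc k) hmk (hv j k)
  have hshift : ∀ J n, ∃ J', ∃ K > 0, ∀ i < n, ∀ k, P J (v k) ≤ K * P J' (v (k + i)) :=
    fun J n => by
      obtain ⟨J', K, hK, hle⟩ := hP.exists_seminorm_pow_apply_le hPmono T J n
      refine ⟨J', K, hK, fun i hi k => ?_⟩
      have := hle i hi (v (k + i))
      rwa [pow_apply_eq_iterate, Function.iterate_apply_add_of_apply_succ hTv] at this
  constructor
  · rintro ⟨J, hJ⟩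
    exact ⟨J, fun j => (hJ j ▸ ENNReal.one_lt_top).trans_le (iSup_iInf_le_iSup_iInf_biSup _)⟩
  · rintro ⟨J, hJ⟩
    obtain ⟨J', hJ'⟩ := exists_forall_mul_le_of_backwardGain hv (hshift J) fun j =>
      exists_backwardGain_of_one_lt_iSup (b := fun k => P J (v k)) (hv j) (hratio J j) (hJ j)
    exact ⟨J', fun j => iSup_iInf_eq_top_of_forall_exists (b := fun k => P J' (v k)) (hv j)
      (hratio J' j) (hJ' j)⟩

/-- **Lemma 4.2.** Let `X` be a Fréchet sequence space over `𝕜 = ℝ` or `ℂ` with a continuous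
norm (encoded by an injective linear coordinate map `toSeq : X →ₗ (ℕ → 𝕜)` which is
continuous into the product space `ω = ℕ → 𝕜`), let `(P_j)` be an increasing sequence of
norms defining the topology of `X`, suppose the unit sequences `e_k` belong to `X`, and let
`B_w : X → X` (here `T`) be a weighted shift with non-zero weights.  The following are
equivalent (computations in `[0,∞]`):
(i) there is `J` such that for every `j`,
`sup_{n≥1} sup_N inf_{k≥N} P_J(T^n e_k)/P_j(e_k) = ∞`;
(ii) there is `J` such that for every `j`,
`sup_{n≥1} sup_N inf_{k≥N} max_{1≤m≤n} P_J(T^m e_k)/P_j(e_k) > 1`. -/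
theorem stmt_13 {𝕜 : Type*} [RCLike 𝕜]
    {X : Type*} [AddCommGroup X] [Module 𝕜 X] [UniformSpace X] [IsUniformAddGroup X]
    [ContinuousSMul 𝕜 X] [CompleteSpace X] [T2Space X]
    (toSeq : X →ₗ[𝕜] (ℕ → 𝕜)) (hinj : Function.Injective toSeq)
    (hcont : Continuous (⇑toSeq))
    (P : ℕ → Seminorm 𝕜 X) (hPmono : Monotone P) (hP : WithSeminorms P)
    (hPnorm : ∀ (j : ℕ) (x : X), x ≠ 0 → 0 < P j x)
    (e : ℕ → X) (he : ∀ k, toSeq (e k) = Pi.single k 1)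
    (w : ℕ → 𝕜) (hw : ∀ n, 1 ≤ n → w n ≠ 0)
    (T : X →L[𝕜] X) (hT0 : T (e 0) = 0)
    (hT : ∀ k : ℕ, 1 ≤ k → T (e k) = w k • e (k - 1)) :
    (∃ J : ℕ, ∀ j : ℕ,
        (⨆ (n : ℕ) (_ : 1 ≤ n) (N : ℕ), ⨅ (k : ℕ) (_ : N ≤ k),
          ENNReal.ofReal (P J ((T ^ n) (e k))) / ENNReal.ofReal (P j (e k))) = ⊤) ↔
      (∃ J : ℕ, ∀ j : ℕ,
        1 < ⨆ (n : ℕ) (_ : 1 ≤ n) (N : ℕ), ⨅ (k : ℕ) (_ : N ≤ k),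
          ⨆ m ∈ Finset.Icc 1 n,
            ENNReal.ofReal (P J ((T ^ m) (e k))) / ENNReal.ofReal (P j (e k))) :=
  stmt_13_general toSeq P hPmono hP hPnorm e he w hw T hT
end

section
/- Let (w_n)_{n≥1} be a sequence of non-zero scalars and (a_{j,k})_{j,k≥1} a family of positive real numbers. Then for every j ≥ 1, the following are equivalent: (a) for every m ≥ 1, sup_{n≥1} sup_{N≥1} inf_{k≥N} [∏_{ν=1}^{n} |w_{ν+k}| · a_{j,k}] / a_{m,n+k} > 1; (b) for every m ≥ 1, sup_{n≥1} inf_{k≥1} [∏_{ν=1}^{n} |w_{ν+k}| · a_{j,k}] / a_{m,n+k} = ∞. -/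
open Filter Topology
open scoped ENNReal NNReal

/-!
Write `c n k` for the quantity of (a) with `m = j` and `f n k` for the one with general `m`.
Splitting the product `∏_{ν ≤ n₁ + n₂}` gives the cocycle identity
`f (n₁ + n₂) k = c n₁ k * f n₂ (n₁ + k)`. If `c n₁ k ≥ t > 1` and `f n₂ k ≥ s > 0` for all large
`k ≥ K`, iterating the identity yields `f (p n₁ + n₂) k ≥ t ^ p s` for `k ≥ K`. Shifting once more
by `K n₁` moves every `k ≥ 1` into this range, at the cost of the factor `c (K n₁) k`, which is
positive and at least `t ^ K ≥ 1` for `k ≥ K`, hence bounded below by some `δ > 0`. Thus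
`inf_{k ≥ 1} f ((K + p) n₁ + n₂) k ≥ δ s t ^ p → ∞`. The converse is monotonicity.
-/

theorem Finset.prod_Icc_one_add {M : Type*} [CommMonoid M] (g : ℕ → M) (n₁ n₂ k : ℕ) :
    ∏ ν ∈ Finset.Icc 1 (n₁ + n₂), g (ν + k) =
      (∏ ν ∈ Finset.Icc 1 n₁, g (ν + k)) * ∏ ν ∈ Finset.Icc 1 n₂, g (ν + (n₁ + k)) := by
  simp only [← Finset.Ico_add_one_right_eq_Icc, Finset.prod_Ico_eq_prod_range,
    Nat.add_sub_cancel, Finset.prod_range_add]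
  congr 2 with i
  congr 1
  omega

theorem lt_iInf_of_lt_of_forall_ge_le {α : Type*} [CompleteLinearOrder α] {g : ℕ → α} {a b : α}
    {N : ℕ} (hg : ∀ k, a < g k) (hab : a < b) (hN : ∀ k, N ≤ k → b ≤ g k) : a < ⨅ k, g k := by
  have hfin : a < (Finset.range N).inf g :=
    (Finset.lt_inf_iff (hab.trans_le le_top)).2 fun k _ => hg k
  refine (lt_min hab hfin).trans_le (le_iInf fun k => ?_)
  rcases lt_or_ge k N with hk | hk
  · exact min_le_of_right_le (Finset.inf_le (Finset.mem_range.2 hk))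
  · exact min_le_of_left_le (hN k hk)

theorem ENNReal.eq_top_of_forall_mul_pow_le {δ t S : ℝ≥0∞} (hδ : δ ≠ 0) (ht : 1 < t)
    (h : ∀ p : ℕ, δ * t ^ p ≤ S) : S = ⊤ := by
  have hlim : Tendsto (fun p : ℕ => δ * t ^ p) atTop (𝓝 ⊤) := by
    simpa [ENNReal.mul_top hδ] using ENNReal.Tendsto.const_mul (a := δ)
      (ENNReal.tendsto_pow_atTop_nhds_top_iff.2 ht) (Or.inl top_ne_zero)
  exact top_le_iff.1 (le_of_tendsto' hlim h)

section Cocycle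

variable {c f : ℕ → ℕ → ℝ≥0∞}

theorem pow_mul_le_of_cocycle (hf : ∀ n₁ n₂ k, f (n₁ + n₂) k = c n₁ k * f n₂ (n₁ + k))
    {n₁ n₂ N : ℕ} {t s : ℝ≥0∞} (ht : ∀ k, N ≤ k → t ≤ c n₁ k) (hs : ∀ k, N ≤ k → s ≤ f n₂ k) :
    ∀ q k, N ≤ k → t ^ q * s ≤ f (q * n₁ + n₂) k
  | 0, k, hk => by simpa using hs k hk
  | q + 1, k, hk =>
    calc t ^ (q + 1) * s = t * (t ^ q * s) := by ring
      _ ≤ c n₁ k * f (q * n₁ + n₂) (n₁ + k) :=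
        mul_le_mul' (ht k hk) (pow_mul_le_of_cocycle hf ht hs q _ (by omega))
      _ = f ((q + 1) * n₁ + n₂) k := by rw [← hf]; congr 1; ring

theorem iSup_iInf_eq_top_of_cocycle (hc : ∀ n₁ n₂ k, c (n₁ + n₂) k = c n₁ k * c n₂ (n₁ + k))
    (hc_zero : ∀ k, c 0 k = 1) (hc_pos : ∀ n k, 0 < c n k)
    (hf : ∀ n₁ n₂ k, f (n₁ + n₂) k = c n₁ k * f n₂ (n₁ + k))
    (hc_growth : 1 < ⨆ (n : ℕ) (_ : 1 ≤ n) (N : ℕ) (_ : 1 ≤ N), ⨅ (k : ℕ) (_ : N ≤ k), c n k)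
    (hf_growth : 0 < ⨆ (n : ℕ) (_ : 1 ≤ n) (N : ℕ) (_ : 1 ≤ N), ⨅ (k : ℕ) (_ : N ≤ k), f n k) :
    ⨆ (n : ℕ) (_ : 1 ≤ n), ⨅ (k : ℕ) (_ : 1 ≤ k), f n k = ⊤ := by
  obtain ⟨n₁, hn₁, N₁, hN₁, ht⟩ : ∃ n₁, ∃ _ : 1 ≤ n₁, ∃ N₁, ∃ _ : 1 ≤ N₁,
      1 < ⨅ (k : ℕ) (_ : N₁ ≤ k), c n₁ k := by
    simpa only [lt_iSup_iff] using hc_growth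
  obtain ⟨n₂, -, N₂, -, hs⟩ : ∃ n₂, ∃ _ : 1 ≤ n₂, ∃ N₂, ∃ _ : 1 ≤ N₂,
      0 < ⨅ (k : ℕ) (_ : N₂ ≤ k), f n₂ k := by
    simpa only [lt_iSup_iff] using hf_growth
  set t := ⨅ (k : ℕ) (_ : N₁ ≤ k), c n₁ k
  set s := ⨅ (k : ℕ) (_ : N₂ ≤ k), f n₂ k
  set K := max N₁ N₂
  have hK : 1 ≤ K := hN₁.trans (le_max_left _ _)
  have hct : ∀ k, K ≤ k → t ≤ c n₁ k := fun k hk => iInf₂_le k (le_of_max_le_left hk)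
  have hfs : ∀ k, K ≤ k → s ≤ f n₂ k := fun k hk => iInf₂_le k (le_of_max_le_right hk)
  have hδ : 0 < ⨅ k, c (K * n₁) k := by
    refine lt_iInf_of_lt_of_forall_ge_le (hc_pos _) zero_lt_one (N := K) fun k hk => ?_
    calc 1 ≤ t ^ K * 1 := by rw [mul_one]; exact one_le_pow₀ ht.le
      _ ≤ c (K * n₁ + 0) k :=
        pow_mul_le_of_cocycle hc hct (fun k _ => (hc_zero k).ge) K k hk
  refine ENNReal.eq_top_of_forall_mul_pow_le (ENNReal.mul_pos hδ.ne' hs.ne').ne' ht fun p => ?_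
  refine le_iSup₂_of_le ((K + p) * n₁ + n₂) (by nlinarith) (le_iInf₂ fun k _ => ?_)
  calc (⨅ k, c (K * n₁) k) * s * t ^ p = (⨅ k, c (K * n₁) k) * (t ^ p * s) := by ring
    _ ≤ c (K * n₁) k * f (p * n₁ + n₂) (K * n₁ + k) :=
      mul_le_mul' (iInf_le _ k) (pow_mul_le_of_cocycle hf hct hfs p _ (by nlinarith))
    _ = f ((K + p) * n₁ + n₂) k := by rw [← hf, add_mul, add_assoc]

theorem iSup_iInf_le_iSup_iSup_iInf :
    ⨆ (n : ℕ) (_ : 1 ≤ n), ⨅ (k : ℕ) (_ : 1 ≤ k), f n k ≤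
      ⨆ (n : ℕ) (_ : 1 ≤ n) (N : ℕ) (_ : 1 ≤ N), ⨅ (k : ℕ) (_ : N ≤ k), f n k :=
  iSup₂_mono fun _ _ => le_iSup₂_of_le 1 le_rfl le_rfl

end Cocycle

section ShiftRatio

variable {𝕜 : Type*} [RCLike 𝕜] {w : ℕ → 𝕜} {a : ℕ → ℕ → ℝ}

noncomputable def shiftRatio (w : ℕ → 𝕜) (a : ℕ → ℕ → ℝ) (j m n k : ℕ) : ℝ≥0∞ :=
  (∏ ν ∈ Finset.Icc 1 n, (‖w (ν + k)‖₊ : ℝ≥0∞)) * ENNReal.ofReal (a j k) /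
    ENNReal.ofReal (a m (n + k))

theorem shiftRatio_add {j m n₁ n₂ k : ℕ} (ha : 0 < a j (n₁ + k)) :
    shiftRatio w a j m (n₁ + n₂) k = shiftRatio w a j j n₁ k * shiftRatio w a j m n₂ (n₁ + k) := by
  have hA : ENNReal.ofReal (a j (n₁ + k)) * (ENNReal.ofReal (a j (n₁ + k)))⁻¹ = 1 :=
    ENNReal.mul_inv_cancel (ENNReal.ofReal_pos.2 ha).ne' ENNReal.ofReal_ne_top
  rw [shiftRatio, shiftRatio, shiftRatio, Finset.prod_Icc_one_add fun i => (‖w i‖₊ : ℝ≥0∞),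
    show n₂ + (n₁ + k) = n₁ + n₂ + k by ring]
  simp only [div_eq_mul_inv]
  calc _ = _ * (ENNReal.ofReal (a j (n₁ + k)) * (ENNReal.ofReal (a j (n₁ + k)))⁻¹) := by
        rw [hA, mul_one]
    _ = _ := by ring

theorem shiftRatio_self_zero {j k : ℕ} (ha : 0 < a j k) : shiftRatio w a j j 0 k = 1 := by
  simp [shiftRatio, ENNReal.div_self (ENNReal.ofReal_pos.2 ha).ne' ENNReal.ofReal_ne_top]

theorem shiftRatio_pos (hw : ∀ n, 1 ≤ n → w n ≠ 0) {j m n k : ℕ} (ha : 0 < a j k) :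
    0 < shiftRatio w a j m n k := by
  have hprod : 0 < ∏ ν ∈ Finset.Icc 1 n, (‖w (ν + k)‖₊ : ℝ≥0∞) :=
    CanonicallyOrderedAdd.prod_pos.2 fun ν hν => ENNReal.coe_pos.2 <|
      nnnorm_pos.2 <| hw _ (by grind)
  exact ENNReal.div_pos_iff.2
    ⟨(ENNReal.mul_pos hprod.ne' (ENNReal.ofReal_pos.2 ha).ne').ne', ENNReal.ofReal_ne_top⟩

end ShiftRatio

/-- **Proposition 4.4.** Let `(w_n)_{n≥1}` be a sequence of non-zero scalars (in `ℝ` or `ℂ`)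
and `(a_{j,k})_{j,k≥1}` a family of (strictly) positive real numbers.  Then for every `j ≥ 1`
the following are equivalent (suprema and infima taken in `[0,∞]`):
(a) for every `m ≥ 1`, `sup_{n≥1} sup_{N≥1} inf_{k≥N} (∏_{ν=1}^{n} |w_{ν+k}|) a_{j,k} / a_{m,n+k} > 1`;
(b) for every `m ≥ 1`, `sup_{n≥1} inf_{k≥1} (∏_{ν=1}^{n} |w_{ν+k}|) a_{j,k} / a_{m,n+k} = ∞`. -/
theorem stmt_15 {𝕜 : Type*} [RCLike 𝕜] (w : ℕ → 𝕜) (hw : ∀ n, 1 ≤ n → w n ≠ 0)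
    (a : ℕ → ℕ → ℝ) (ha : ∀ j k, 0 < a j k) (j : ℕ) (hj : 1 ≤ j) :
    (∀ m : ℕ, 1 ≤ m →
        1 < ⨆ (n : ℕ) (_ : 1 ≤ n) (N : ℕ) (_ : 1 ≤ N), ⨅ (k : ℕ) (_ : N ≤ k),
          (∏ ν ∈ Finset.Icc 1 n, (‖w (ν + k)‖₊ : ℝ≥0∞)) * ENNReal.ofReal (a j k) /
            ENNReal.ofReal (a m (n + k))) ↔
      (∀ m : ℕ, 1 ≤ m →
        (⨆ (n : ℕ) (_ : 1 ≤ n), ⨅ (k : ℕ) (_ : 1 ≤ k),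
          (∏ ν ∈ Finset.Icc 1 n, (‖w (ν + k)‖₊ : ℝ≥0∞)) * ENNReal.ofReal (a j k) /
            ENNReal.ofReal (a m (n + k))) = ⊤) := by
  have hcocycle : ∀ m n₁ n₂ k, shiftRatio w a j m (n₁ + n₂) k =
      shiftRatio w a j j n₁ k * shiftRatio w a j m n₂ (n₁ + k) :=
    fun _ _ _ _ => shiftRatio_add (ha j _)
  constructor
  · intro h m hm
    exact iSup_iInf_eq_top_of_cocycle (hcocycle j) (fun k => shiftRatio_self_zero (ha j k))
      (fun _ k => shiftRatio_pos hw (ha j k)) (hcocycle m) (h j hj) (zero_lt_one.trans (h m hm))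
  · intro h m hm
    exact (h m hm ▸ ENNReal.one_lt_top).trans_le iSup_iInf_le_iSup_iSup_iInf
end
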